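/- Let G = (V, E; w) be a graph with strictly positive edge weights. If the matching game Γ_G admits a PMAS, then G contains no induced co-banner: there do not exist distinct vertices 1, 2, 3, 4, 5 whose induced subgraph has edge set exactly {12, 23, 34, 35, 45}. -/

import Mathlib

open Finset

/-- `M` is a matching of the induced subgraph `G[S]`, given as a finite set of
(ordered representatives of) edges with endpoints in `S`, pairwise vertex-disjoint. -/
def IsMatchingIn {V : Type*} (G : SimpleGraph V) (S : Finset V)
    (M : Finset (V × V)) : Prop :=
  (∀ p ∈ M, G.Adj p.1 p.2 ∧ p.1 ∈ S ∧ p.2 ∈ S) ∧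
  (∀ p ∈ M, ∀ q ∈ M, p ≠ q →
    p.1 ≠ q.1 ∧ p.1 ≠ q.2 ∧ p.2 ≠ q.1 ∧ p.2 ≠ q.2)

/-- `r` is the maximum total weight of a matching in the induced subgraph `G[S]`. -/
def IsMaxMatchingWeight {V : Type*} (G : SimpleGraph V)
    (w : V → V → ℝ) (S : Finset V) (r : ℝ) : Prop :=
  (∃ M : Finset (V × V), IsMatchingIn G S M ∧ ∑ p ∈ M, w p.1 p.2 = r) ∧
  (∀ M : Finset (V × V), IsMatchingIn G S M → ∑ p ∈ M, w p.1 p.2 ≤ r)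

/-- A population monotonic allocation scheme (PMAS): `x S i` is the payoff of player `i`
in coalition `S`.  Efficiency holds for every nonempty coalition, and every player's
payoff is monotone under coalition inclusion. -/
def IsPMAS {N : Type*} [DecidableEq N] (γ : Finset N → ℝ)
    (x : Finset N → N → ℝ) : Prop :=
  (∀ S : Finset N, S.Nonempty → ∑ i ∈ S, x S i = γ S) ∧
  (∀ S T : Finset N, S ⊆ T → ∀ i ∈ S, x S i ≤ x T i)

/-! Only coalitions of at most three players matter. Since `v1` is a leaf at `v2`, the share of
`v3` in `{v2, v3}` is at most `γ {v1, v2, v3} - γ {v1, v2} < w v2 v3`. If `w v2 v3 ≤ w v3 v4`, then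
`v2` adds nothing to `{v3, v4}`, so it gets nothing in `{v2, v3, v4}` nor in `{v2, v3}`, and `v3`
would get all of `w v2 v3` there; likewise with `v5`. Otherwise `v4` and `v5` add nothing to
`{v2, v3}`, so `v3` takes all of `w v3 v4` and `w v3 v5` in the pairs, hence at least their maximum
in the triangle, which leaves less than `w v4 v5` to `v4` and `v5`. -/

namespace IsPMAS

variable {N : Type*} [DecidableEq N] {γ : Finset N → ℝ} {x : Finset N → N → ℝ}

theorem le_sum (hx : IsPMAS γ x) {S T : Finset N} (hS : S.Nonempty) (hST : S ⊆ T) :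
    γ S ≤ ∑ i ∈ S, x T i :=
  hx.1 S hS ▸ sum_le_sum fun i hi => hx.2 S T hST i hi

theorem nonneg (hx : IsPMAS γ x) (hγ : ∀ i, 0 ≤ γ {i}) {S : Finset N} {i : N} (hi : i ∈ S) :
    0 ≤ x S i := by
  simpa using (hγ i).trans (hx.le_sum (singleton_nonempty i) (singleton_subset_iff.2 hi))

theorem le_sub (hx : IsPMAS γ x) (hγ : ∀ i, 0 ≤ γ {i}) {S T : Finset N} {i : N}
    (hS : S.Nonempty) (hST : S ⊆ T) (hiT : i ∈ T) (hiS : i ∉ S) :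
    x T i ≤ γ T - γ S := by
  have hrest : x T i ≤ ∑ j ∈ T \ S, x T j :=
    single_le_sum (fun j hj => hx.nonneg hγ (sdiff_subset hj)) (mem_sdiff.2 ⟨hiT, hiS⟩)
  have hS_share := hx.le_sum hS hST
  rw [← hx.1 T ⟨i, hiT⟩, ← sum_sdiff hST]
  linarith

theorem add_eq_pair (hx : IsPMAS γ x) {i j : N} (hij : i ≠ j) :
    x {i, j} i + x {i, j} j = γ {i, j} := by
  rw [← sum_pair hij]
  exact hx.1 _ (insert_nonempty _ _)

theorem le_of_dummy (hx : IsPMAS γ x) (hγ : ∀ i, 0 ≤ γ {i}) {S T : Finset N} {i j : N}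
    (hij : i ≠ j) (hS : S.Nonempty) (hST : S ⊆ T) (hiT : i ∈ T) (hjT : j ∈ T) (hiS : i ∉ S)
    (hdummy : γ T ≤ γ S) : γ {i, j} ≤ x {i, j} j := by
  have hmono : x {i, j} i ≤ x T i :=
    hx.2 _ _ (insert_subset hiT (singleton_subset_iff.2 hjT)) i (mem_insert_self _ _)
  have hzero := hx.le_sub hγ hS hST hiT hiS
  linarith [hx.add_eq_pair hij]

theorem add_le_of_pendant (hx : IsPMAS γ x) (hγ : ∀ i, 0 ≤ γ {i}) {v1 v2 v3 u : N}
    (h13 : v1 ≠ v3) (h23 : v2 ≠ v3) (h2u : v2 ≠ u) (hdummy : γ {v2, v3, u} ≤ γ {v3, u}) :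
    γ {v1, v2} + γ {v2, v3} ≤ γ {v1, v2, v3} := by
  have hshare := hx.le_of_dummy hγ h23 (insert_nonempty _ _) (subset_insert _ _)
    (by simp) (by simp) (by simp [h23, h2u]) hdummy
  have hmono : x {v2, v3} v3 ≤ x {v1, v2, v3} v3 := hx.2 _ _ (subset_insert _ _) v3 (by simp)
  have hleaf := hx.le_sub hγ (T := {v1, v2, v3}) (i := v3) (insert_nonempty v1 {v2})
    (by simp [subset_iff]) (by simp) (by simp [h13.symm, h23.symm])
  linarith

theorem add_le_of_dominated_triangle (hx : IsPMAS γ x) (hγ : ∀ i, 0 ≤ γ {i})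
    {v2 v3 v4 v5 : N} (h24 : v2 ≠ v4) (h25 : v2 ≠ v5) (h34 : v3 ≠ v4)
    (h35 : v3 ≠ v5) (hdummy4 : γ {v2, v3, v4} ≤ γ {v2, v3})
    (hdummy5 : γ {v2, v3, v5} ≤ γ {v2, v3}) :
    γ {v3, v4} + γ {v4, v5} ≤ γ {v3, v4, v5} ∧ γ {v3, v5} + γ {v4, v5} ≤ γ {v3, v4, v5} := by
  have hshare4 := hx.le_of_dummy hγ h34.symm (insert_nonempty _ _) (by simp [subset_iff])
    (by simp) (by simp) (by simp [h24.symm, h34.symm]) hdummy4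
  have hshare5 := hx.le_of_dummy hγ h35.symm (insert_nonempty _ _) (by simp [subset_iff])
    (by simp) (by simp) (by simp [h25.symm, h35.symm]) hdummy5
  rw [pair_comm] at hshare4 hshare5
  have hmono4 : x {v3, v4} v3 ≤ x {v3, v4, v5} v3 := hx.2 _ _ (by simp [subset_iff]) v3 (by simp)
  have hmono5 : x {v3, v5} v3 ≤ x {v3, v4, v5} v3 := hx.2 _ _ (by simp [subset_iff]) v3 (by simp)
  have hapex := hx.le_sub hγ (T := {v3, v4, v5}) (i := v3) (insert_nonempty v4 {v5})
    (subset_insert _ _) (by simp) (by simp [h34, h35])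
  constructor <;> linarith

end IsPMAS

theorem IsMatchingIn.two_mul_card_le {V : Type*} [DecidableEq V] {G : SimpleGraph V}
    {S : Finset V} {M : Finset (V × V)} (hM : IsMatchingIn G S M) : 2 * #M ≤ #S := by
  have hdisj : (M : Set (V × V)).PairwiseDisjoint fun p => ({p.1, p.2} : Finset V) := by
    intro p hp q hq hpq
    obtain ⟨h11, h12, h21, h22⟩ := hM.2 p hp q hq hpq
    simp [h11.symm, h12.symm, h21.symm, h22.symm]
  calc 2 * #M = ∑ p ∈ M, #({p.1, p.2} : Finset V) := by
        rw [sum_congr rfl fun p hp => card_pair (hM.1 p hp).1.ne, sum_const, smul_eq_mul,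
          mul_comm]
    _ = #(M.biUnion fun p => {p.1, p.2}) := (card_biUnion hdisj).symm
    _ ≤ #S := card_le_card <| biUnion_subset.2 fun p hp =>
        insert_subset (hM.1 p hp).2.1 (singleton_subset_iff.2 (hM.1 p hp).2.2)

namespace IsMaxMatchingWeight

variable {V : Type*} {G : SimpleGraph V} {w : V → V → ℝ} {S : Finset V} {r : ℝ}

theorem nonneg (h : IsMaxMatchingWeight G w S r) : 0 ≤ r := by
  simpa using h.2 ∅ ⟨by simp, by simp⟩

theorem le_of_adj (h : IsMaxMatchingWeight G w S r) {u v : V} (huv : G.Adj u v) (hu : u ∈ S)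
    (hv : v ∈ S) : w u v ≤ r := by
  simpa using h.2 {(u, v)} ⟨by simpa using ⟨huv, hu, hv⟩, by simp⟩

theorem le_of_card_le_three [DecidableEq V] (h : IsMaxMatchingWeight G w S r) (hS : #S ≤ 3)
    {C : ℝ} (hC : 0 ≤ C) (hw : ∀ u ∈ S, ∀ v ∈ S, G.Adj u v → w u v ≤ C) : r ≤ C := by
  obtain ⟨M, hM, rfl⟩ := h.1
  have hcard : #M ≤ 1 := by
    have := hM.two_mul_card_le
    omega
  calc ∑ p ∈ M, w p.1 p.2 ≤ #M • C :=
        sum_le_card_nsmul _ _ _ fun p hp =>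
          hw _ (hM.1 p hp).2.1 _ (hM.1 p hp).2.2 (hM.1 p hp).1
    _ ≤ C := by
        rw [nsmul_eq_mul]
        exact mul_le_of_le_one_left hC (by exact_mod_cast hcard)

theorem le_of_triple [DecidableEq V] (hsym : ∀ a b, w a b = w b a) {α β δ : V}
    (h : IsMaxMatchingWeight G w {α, β, δ} r) {C : ℝ} (hC : 0 ≤ C)
    (hαβ : G.Adj α β → w α β ≤ C) (hαδ : G.Adj α δ → w α δ ≤ C)
    (hβδ : G.Adj β δ → w β δ ≤ C) : r ≤ C := by
  refine h.le_of_card_le_three card_le_three hC ?_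
  simp only [mem_insert, mem_singleton]
  rintro u (rfl | rfl | rfl) v (rfl | rfl | rfl) huv
  all_goals first
    | exact (G.irrefl huv).elim
    | exact hαβ huv | exact hαδ huv | exact hβδ huv
    | rw [hsym]; first | exact hαβ huv.symm | exact hαδ huv.symm | exact hβδ huv.symm

theorem le_max_of_not_adj [DecidableEq V] (hsym : ∀ a b, w a b = w b a) {α β δ : V}
    (h : IsMaxMatchingWeight G w {α, β, δ} r) (hαβ : 0 ≤ w α β) (hαδ : ¬ G.Adj α δ) :
    r ≤ max (w α β) (w β δ) :=
  h.le_of_triple hsym (hαβ.trans (le_max_left _ _)) (fun _ => le_max_left _ _)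
    (fun h => absurd h hαδ) (fun _ => le_max_right _ _)

theorem le_max_triple [DecidableEq V] (hsym : ∀ a b, w a b = w b a) {α β δ : V}
    (h : IsMaxMatchingWeight G w {α, β, δ} r) (hαβ : 0 ≤ w α β) :
    r ≤ max (w α β) (max (w α δ) (w β δ)) :=
  h.le_of_triple hsym (hαβ.trans (le_max_left _ _)) (fun _ => le_max_left _ _)
    (fun _ => (le_max_left _ _).trans (le_max_right _ _))
    (fun _ => (le_max_right _ _).trans (le_max_right _ _))

end IsMaxMatchingWeight

theorem matchingGame_coBanner_free_general {V : Type*} [DecidableEq V]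
    (G : SimpleGraph V) (w : V → V → ℝ)
    (hsym : ∀ a b : V, w a b = w b a)
    (hpos : ∀ a b : V, G.Adj a b → 0 < w a b)
    (γ : Finset V → ℝ)
    (hγ : ∀ S : Finset V, IsMaxMatchingWeight G w S (γ S))
    (hpmas : ∃ x : Finset V → V → ℝ, IsPMAS γ x) :
    ¬ ∃ v1 v2 v3 v4 v5 : V,
      v1 ≠ v2 ∧ v1 ≠ v3 ∧ v1 ≠ v4 ∧ v1 ≠ v5 ∧ v2 ≠ v3 ∧ v2 ≠ v4 ∧ v2 ≠ v5 ∧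
      v3 ≠ v4 ∧ v3 ≠ v5 ∧ v4 ≠ v5 ∧
      G.Adj v1 v2 ∧ G.Adj v2 v3 ∧ G.Adj v3 v4 ∧ G.Adj v3 v5 ∧ G.Adj v4 v5 ∧
      ¬ G.Adj v1 v3 ∧ ¬ G.Adj v1 v4 ∧ ¬ G.Adj v1 v5 ∧ ¬ G.Adj v2 v4 ∧ ¬ G.Adj v2 v5 := by
  rintro ⟨v1, v2, v3, v4, v5, -, h13, -, -, h23, h24, h25, h34, h35, -,
    A12, A23, A34, A35, A45, N13, -, -, N24, N25⟩
  obtain ⟨x, hx⟩ := hpmas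
  have hγ0 : ∀ i, 0 ≤ γ {i} := fun i => (hγ {i}).nonneg
  have hedge {u v : V} (huv : G.Adj u v) : 0 < w u v ∧ w u v ≤ γ {u, v} :=
    ⟨hpos u v huv, (hγ _).le_of_adj huv (by simp) (by simp)⟩
  obtain ⟨ha, hγ12⟩ := hedge A12
  obtain ⟨hb, hγ23⟩ := hedge A23
  obtain ⟨hc, hγ34⟩ := hedge A34
  obtain ⟨hd, hγ35⟩ := hedge A35
  obtain ⟨he, hγ45⟩ := hedge A45
  have h123 := (hγ {v1, v2, v3}).le_max_of_not_adj hsym ha.le N13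
  have h234 := (hγ {v2, v3, v4}).le_max_of_not_adj hsym hb.le N24
  have h235 := (hγ {v2, v3, v5}).le_max_of_not_adj hsym hb.le N25
  have h345 := (hγ {v3, v4, v5}).le_max_triple hsym hc.le
  have hpendant : γ {v1, v2, v3} < γ {v1, v2} + γ {v2, v3} :=
    h123.trans_lt (max_lt (by linarith) (by linarith))
  rcases le_or_gt (w v2 v3) (w v3 v4) with hbc | hcb
  · exact hpendant.not_ge <| hx.add_le_of_pendant hγ0 h13 h23 h24 <|
      h234.trans ((max_eq_right hbc).le.trans hγ34)
  rcases le_or_gt (w v2 v3) (w v3 v5) with hbd | hdb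
  · exact hpendant.not_ge <| hx.add_le_of_pendant hγ0 h13 h23 h25 <|
      h235.trans ((max_eq_right hbd).le.trans hγ35)
  obtain ⟨htri4, htri5⟩ := hx.add_le_of_dominated_triangle hγ0 h24 h25 h34 h35
    (h234.trans ((max_eq_left hcb.le).le.trans hγ23))
    (h235.trans ((max_eq_left hdb.le).le.trans hγ23))
  exact lt_irrefl _ <| h345.trans_lt (max_lt (by linarith) (max_lt (by linarith) (by linarith)))

/-- Co-banner-freeness (Lemma 3.9). -/
theorem matchingGame_coBanner_free {V : Type*} [Fintype V] [DecidableEq V]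
    (G : SimpleGraph V) (w : V → V → ℝ)
    (hsym : ∀ a b : V, w a b = w b a)
    (hpos : ∀ a b : V, G.Adj a b → 0 < w a b)
    (γ : Finset V → ℝ)
    (hγ : ∀ S : Finset V, IsMaxMatchingWeight G w S (γ S))
    (hpmas : ∃ x : Finset V → V → ℝ, IsPMAS γ x) :
    ¬ ∃ v1 v2 v3 v4 v5 : V,
      v1 ≠ v2 ∧ v1 ≠ v3 ∧ v1 ≠ v4 ∧ v1 ≠ v5 ∧ v2 ≠ v3 ∧ v2 ≠ v4 ∧ v2 ≠ v5 ∧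
      v3 ≠ v4 ∧ v3 ≠ v5 ∧ v4 ≠ v5 ∧
      G.Adj v1 v2 ∧ G.Adj v2 v3 ∧ G.Adj v3 v4 ∧ G.Adj v3 v5 ∧ G.Adj v4 v5 ∧
      ¬ G.Adj v1 v3 ∧ ¬ G.Adj v1 v4 ∧ ¬ G.Adj v1 v5 ∧ ¬ G.Adj v2 v4 ∧ ¬ G.Adj v2 v5 :=
  matchingGame_coBanner_free_general G w hsym hpos γ hγ hpmas
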